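/- The noise channel induced by a photon loss on the target mode during the CNOT gate, averaged over the uniformly random jump time, equals an incoherent mixture of Z₂ and Z₁Z₂ phase-flip errors with coherences: for every 4×4 complex matrix ρ, (1/π) ∫_{−π}^{0} U_err(θ) ρ U_err(θ)† dθ = ½ Z₂ ρ Z₂ + ½ Z₁Z₂ ρ Z₁Z₂ + (i/π) Z₁Z₂ ρ Z₂ − (i/π) Z₂ ρ Z₁Z₂, where U_err(θ) = ½(I + Z₁)Z₂ + ½ e^{iθ}(I − Z₁)Z₂. -/

import Mathlib

open Matrix Kronecker

attribute [local instance] Matrix.normedAddCommGroup Matrix.normedSpace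

/-- The Pauli-Z matrix `diag(1, -1)`. -/
noncomputable def PauliZ : Matrix (Fin 2) (Fin 2) ℂ := !![1, 0; 0, -1]

/-- `Z₁ = Z ⊗ I` on two qubits. -/
noncomputable def Z1 : Matrix (Fin 2 × Fin 2) (Fin 2 × Fin 2) ℂ :=
  PauliZ ⊗ₖ (1 : Matrix (Fin 2) (Fin 2) ℂ)

/-- `Z₂ = I ⊗ Z` on two qubits. -/
noncomputable def Z2 : Matrix (Fin 2 × Fin 2) (Fin 2 × Fin 2) ℂ :=
  (1 : Matrix (Fin 2) (Fin 2) ℂ) ⊗ₖ PauliZ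

/-- The error unitary `U_err(θ) = ½(I + Z₁)Z₂ + ½ e^{iθ}(I − Z₁)Z₂` produced by a
photon loss on the target mode at a (rescaled) random time `θ` during the CNOT. -/
noncomputable def UerrCNOT (θ : ℝ) : Matrix (Fin 2 × Fin 2) (Fin 2 × Fin 2) ℂ :=
  ((1 : ℂ) / 2) • (((1 : Matrix (Fin 2 × Fin 2) (Fin 2 × Fin 2) ℂ) + Z1) * Z2)
    + ((1 : ℂ) / 2 * Complex.exp (Complex.I * (θ : ℂ))) •
        (((1 : Matrix (Fin 2 × Fin 2) (Fin 2 × Fin 2) ℂ) - Z1) * Z2)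

/-! `U_err(θ) = A + e^{iθ} B` with the Hermitian matrices `A = ½(Z₂ + Z₁Z₂)` and
`B = ½(Z₂ − Z₁Z₂)`, so `U ρ U† = AρA + BρB + e^{−iθ} AρB + e^{iθ} BρA`. Over `[−π, 0]` the
phases `e^{∓iθ}` integrate to `±2i`, and expanding `A` and `B` in `Z₂`, `Z₁Z₂` gives the formula. -/

open Complex

lemma PauliZ_isHermitian : PauliZ.IsHermitian := by
  ext i j
  fin_cases i <;> fin_cases j <;> simp [PauliZ]

lemma Z1_isHermitian : Z1.IsHermitian := by
  simp [IsHermitian, Z1, conjTranspose_kronecker, PauliZ_isHermitian.eq]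

lemma Z2_isHermitian : Z2.IsHermitian := by
  simp [IsHermitian, Z2, conjTranspose_kronecker, PauliZ_isHermitian.eq]

lemma commute_Z1_Z2 : Commute Z1 Z2 := by
  simp [Commute, SemiconjBy, Z1, Z2, ← mul_kronecker_mul]

lemma Z1_mul_Z2_isHermitian : (Z1 * Z2).IsHermitian :=
  (IsSelfAdjoint.commute_iff Z1_isHermitian Z2_isHermitian).1 commute_Z1_Z2

lemma UerrCNOT_eq (θ : ℝ) :
    UerrCNOT θ = (1 / 2 : ℂ) • (Z2 + Z1 * Z2) + exp (I * θ) • ((1 / 2 : ℂ) • (Z2 - Z1 * Z2)) := by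
  rw [UerrCNOT, add_mul, sub_mul, one_mul, mul_comm (1 / 2 : ℂ), mul_smul]

lemma integral_exp_mul_neg_pi_zero {c : ℂ} (hc : exp (-(c * Real.pi)) = -1) :
    ∫ θ in -Real.pi..0, exp (c * θ) = 2 / c := by
  have hc0 : c ≠ 0 := by rintro rfl; norm_num at hc
  rw [integral_exp_mul_complex hc0]
  push_cast
  rw [mul_zero, exp_zero, mul_neg, hc]
  ring

lemma integral_exp_I_mul_neg_pi_zero : ∫ θ in -Real.pi..0, exp (I * θ) = -2 * I := by
  rw [integral_exp_mul_neg_pi_zero (by rw [exp_neg, mul_comm, exp_pi_mul_I]; norm_num)]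
  field_simp
  simp

lemma integral_exp_neg_I_mul_neg_pi_zero : ∫ θ in -Real.pi..0, exp (-I * θ) = 2 * I := by
  rw [integral_exp_mul_neg_pi_zero (by rw [neg_mul, neg_neg, mul_comm, exp_pi_mul_I])]
  field_simp
  simp

lemma integral_const_add_exp_smul_add_exp_smul {E : Type*} [NormedAddCommGroup E]
    [NormedSpace ℂ E] [CompleteSpace E] (X Y W : E) :
    ∫ θ in -Real.pi..0, (X + exp (-I * θ) • Y + exp (I * θ) • W)
      = (Real.pi : ℂ) • X + (2 * I) • Y - (2 * I) • W := by
  have hint (c : ℂ) (V : E) :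
      IntervalIntegrable (fun θ : ℝ => exp (c * θ) • V) MeasureTheory.volume (-Real.pi) 0 := by
    apply Continuous.intervalIntegrable; fun_prop
  rw [intervalIntegral.integral_add (intervalIntegrable_const.add (hint _ _)) (hint _ _),
    intervalIntegral.integral_add intervalIntegrable_const (hint _ _),
    intervalIntegral.integral_const, intervalIntegral.integral_smul_const,
    intervalIntegral.integral_smul_const, integral_exp_I_mul_neg_pi_zero,
    integral_exp_neg_I_mul_neg_pi_zero, sub_neg_eq_add, zero_add, Complex.coe_smul, neg_mul,
    neg_smul, sub_eq_add_neg]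

section

variable {n : Type*} [Fintype n]

lemma add_smul_mul_mul_conjTranspose (A B ρ : Matrix n n ℂ) {z : ℂ} (hz : star z * z = 1) :
    (A + z • B) * ρ * (A + z • B)ᴴ
      = (A * ρ * Aᴴ + B * ρ * Bᴴ) + star z • (A * ρ * Bᴴ) + z • (B * ρ * Aᴴ) := by
  simp only [conjTranspose_add, conjTranspose_smul, add_mul, mul_add, Matrix.smul_mul,
    Matrix.mul_smul, smul_smul, hz, one_smul]
  abel

lemma integral_add_exp_smul_mul_mul_conjTranspose (A B ρ : Matrix n n ℂ) :
    ∫ θ in -Real.pi..0, (A + exp (I * θ) • B) * ρ * (A + exp (I * θ) • B)ᴴ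
      = (Real.pi : ℂ) • (A * ρ * Aᴴ + B * ρ * Bᴴ) + (2 * I) • (A * ρ * Bᴴ)
        - (2 * I) • (B * ρ * Aᴴ) := by
  have hconj (θ : ℝ) : star (exp (I * θ)) = exp (-I * θ) := by
    rw [star_def, ← exp_conj]; simp
  have hunit (θ : ℝ) : star (exp (I * θ)) * exp (I * θ) = 1 := by
    rw [hconj, ← exp_add]; ring_nf; exact exp_zero
  simp_rw [add_smul_mul_mul_conjTranspose A B ρ (hunit _), hconj]
  exact integral_const_add_exp_smul_add_exp_smul _ _ _

end

/-- The noise channel induced by a photon loss on the target mode during the CNOT,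
averaged over the uniformly random jump time, is an incoherent mixture of `Z₂` and
`Z₁Z₂` phase flips together with coherences:
`(1/π)∫_{−π}^0 U_err(θ) ρ U_err(θ)† dθ
  = ½ Z₂ρZ₂ + ½ Z₁Z₂ρZ₁Z₂ + (i/π) Z₁Z₂ρZ₂ − (i/π) Z₂ρZ₁Z₂`. -/
theorem CNOT_photon_loss_channel (ρ : Matrix (Fin 2 × Fin 2) (Fin 2 × Fin 2) ℂ) :
    ((1 : ℂ) / (Real.pi : ℂ)) •
        (∫ θ in (-Real.pi : ℝ)..0, UerrCNOT θ * ρ * (UerrCNOT θ)ᴴ)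
      = ((1 : ℂ) / 2) • (Z2 * ρ * Z2)
        + ((1 : ℂ) / 2) • ((Z1 * Z2) * ρ * (Z1 * Z2))
        + (Complex.I / (Real.pi : ℂ)) • ((Z1 * Z2) * ρ * Z2)
        - (Complex.I / (Real.pi : ℂ)) • (Z2 * ρ * (Z1 * Z2)) := by
  have hπ : (Real.pi : ℂ) ≠ 0 := ofReal_ne_zero.mpr Real.pi_ne_zero
  have hhalf : IsSelfAdjoint (1 / 2 : ℂ) := by simp [IsSelfAdjoint]
  simp_rw [UerrCNOT_eq]
  rw [integral_add_exp_smul_mul_mul_conjTranspose,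
    ((Z2_isHermitian.add Z1_mul_Z2_isHermitian).smul hhalf).eq,
    ((Z2_isHermitian.sub Z1_mul_Z2_isHermitian).smul hhalf).eq]
  simp only [Matrix.add_mul, Matrix.mul_add, Matrix.sub_mul, Matrix.mul_sub, Matrix.smul_mul,
    Matrix.mul_smul, smul_add, smul_sub, smul_smul]
  match_scalars <;> field_simp <;> ring
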